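/- arXiv:1512.03838 — 4 statements merged into one kernel-verified Lean document; each statement's English description precedes it below -/
import Mathlib

section
/- The quadratic optimization problem minimizing (1/2)·Σ_i f_i u_i² over (u,V) subject to L V = I + u (with L a connected-graph Laplacian and f_i > 0) has optimal controlled injection u* = μ F^{-1} 1_n, where F = diag(f_1,...,f_n) and μ = -(Σ_i I_i)/(Σ_i f_i^{-1}). -/
/-!
For symmetric `L` the range is the orthogonal complement of the kernel, here the constants, so
`L V = I + u` is solvable exactly when `∑ u = -∑ I`. On that hyperplane, `f i * u* i = μ` is
constant, so expanding the cost around `u*` kills the cross term `μ ∑ (u - u*)` and leaves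
`∑ f (u - u*)² ≥ 0`.
-/

open Matrix Finset

theorem Matrix.IsHermitian.exists_mulVec_eq_iff {𝕜 ι : Type*} [RCLike 𝕜] [Fintype ι]
    [DecidableEq ι] {A : Matrix ι ι 𝕜} (hA : A.IsHermitian) (w : ι → 𝕜) :
    (∃ v, A *ᵥ v = w) ↔ ∀ v, A *ᵥ v = 0 → w ⬝ᵥ star v = 0 := by
  have h := LinearMap.orthogonal_ker (toEuclideanLin A)
  rw [← toEuclideanLin_conjTranspose_eq_adjoint, hA.eq] at h
  have hw := congrArg (WithLp.toLp 2 w ∈ ·) h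
  simp only [Submodule.mem_orthogonal, LinearMap.mem_ker, LinearMap.mem_range, eq_iff_iff,
    (WithLp.toLp_surjective 2).forall, (WithLp.toLp_surjective 2).exists, toLpLin_toLp,
    EuclideanSpace.inner_toLp_toLp] at hw
  simpa [toLin'_apply] using hw.symm

theorem Matrix.IsHermitian.exists_mulVec_eq_iff_sum_eq_zero {ι : Type*} [Fintype ι]
    [DecidableEq ι] {L : Matrix ι ι ℝ} (hL : L.IsHermitian)
    (hker : ∀ v : ι → ℝ, L *ᵥ v = 0 ↔ ∃ c : ℝ, v = fun _ => c) (w : ι → ℝ) :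
    (∃ V, L *ᵥ V = w) ↔ ∑ i, w i = 0 := by
  rw [hL.exists_mulVec_eq_iff]
  constructor
  · intro hw
    simpa [dotProduct] using hw _ ((hker _).2 ⟨1, rfl⟩)
  · rintro hw v hv
    obtain ⟨c, rfl⟩ := (hker v).1 hv
    simp [dotProduct, ← sum_mul, hw]

theorem sum_mul_sq_le_of_sum_eq {ι : Type*} [Fintype ι] {f u : ι → ℝ} (hf : ∀ i, 0 < f i)
    (μ : ℝ) (hsum : ∑ i, μ * (f i)⁻¹ = ∑ i, u i) :
    ∑ i, f i * (μ * (f i)⁻¹) ^ 2 ≤ ∑ i, f i * u i ^ 2 := by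
  set ustar : ι → ℝ := fun i => μ * (f i)⁻¹
  have hexpand : ∀ i, f i * u i ^ 2
      = f i * ustar i ^ 2 + f i * (u i - ustar i) ^ 2 + 2 * μ * (u i - ustar i) := by
    intro i
    have : f i * ustar i = μ := by simp only [ustar]; field_simp [(hf i).ne']
    rw [← this]; ring
  have hcross : ∑ i, (u i - ustar i) = 0 := by rw [sum_sub_distrib, hsum, sub_self]
  have hsq : 0 ≤ ∑ i, f i * (u i - ustar i) ^ 2 :=
    sum_nonneg fun i _ => mul_nonneg (hf i).le (sq_nonneg _)
  calc ∑ i, f i * ustar i ^ 2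
      ≤ ∑ i, f i * ustar i ^ 2 + ∑ i, f i * (u i - ustar i) ^ 2
          + 2 * μ * ∑ i, (u i - ustar i) := by rw [hcross]; linarith
    _ = ∑ i, f i * u i ^ 2 := by
      simp only [hexpand, sum_add_distrib, mul_sum]

/-- The quadratic program `min (1/2)∑ f i * u i ^ 2` subject to `L V = I + u` has
optimal controlled injection `u* = μ F⁻¹ 1ₙ` with `μ = -(∑ I i)/(∑ (f i)⁻¹)`. -/
theorem stmt2 (n : ℕ) (hn : 0 < n) (L : Matrix (Fin n) (Fin n) ℝ)
    (hLpsd : L.PosSemidef)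
    (hker : ∀ v : Fin n → ℝ, L *ᵥ v = 0 ↔ ∃ c : ℝ, v = fun _ => c)
    (I : Fin n → ℝ) (f : Fin n → ℝ) (hf : ∀ i, 0 < f i) :
    letI μ : ℝ := -(∑ i, I i) / (∑ i, (f i)⁻¹)
    letI ustar : Fin n → ℝ := fun i => μ * (f i)⁻¹
    (∃ V : Fin n → ℝ, L *ᵥ V = I + ustar) ∧
      ∀ u : Fin n → ℝ, (∃ V : Fin n → ℝ, L *ᵥ V = I + u) →
        ∑ i, (1 / 2) * f i * ustar i ^ 2 ≤ ∑ i, (1 / 2) * f i * u i ^ 2 := by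
  set μ : ℝ := -(∑ i, I i) / (∑ i, (f i)⁻¹)
  set ustar : Fin n → ℝ := fun i => μ * (f i)⁻¹
  have hsolv := hLpsd.isHermitian.exists_mulVec_eq_iff_sum_eq_zero hker
  have hfinv : ∑ i, (f i)⁻¹ ≠ 0 :=
    (sum_pos (fun i _ => inv_pos.mpr (hf i)) ⟨⟨0, hn⟩, mem_univ _⟩).ne'
  have hustar : ∑ i, ustar i = -∑ i, I i := by
    rw [← mul_sum, div_mul_cancel₀ _ hfinv]
  refine ⟨(hsolv _).2 ?_, fun u hu => ?_⟩
  · simp only [Pi.add_apply, sum_add_distrib, hustar, add_neg_cancel]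
  · have hu : ∑ i, u i = -∑ i, I i := by
      have := (hsolv _).1 hu
      simp only [Pi.add_apply, sum_add_distrib] at this
      linarith
    simp only [mul_assoc, ← mul_sum]
    exact mul_le_mul_of_nonneg_left (sum_mul_sq_le_of_sum_eq hf μ (hustar.trans hu.symm))
      (by norm_num)
end

section
/- Let L_γ = (1/γ)L + K^P where L is a connected-graph Laplacian and K^P a positive definite diagonal matrix. As γ → 0+, the equilibrium V'(γ) = L_γ^{-1} I^inj converges to (a/λ) 1_n for scalars a, λ; specifically lim_{γ→0} V'(γ) = ((Σ_i I_i^inj)/(Σ_i K^P_i)) 1_n. -/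
/-!
For `γ > 0` the equilibrium `v = ((1/γ)L + Kᴾ)⁻¹ I` satisfies `(L + γKᴾ) v = γ I`, and, since the
columns of `L` sum to zero, also the conservation law `Kᴾ ⬝ᵥ v = ∑ I`. Adding `1 (Kᴾ)ᵀ` to the
first system merges the two: `(L + γKᴾ + 1 (Kᴾ)ᵀ) v = γ I + (∑ I) 1`. Unlike `L + γKᴾ`, this
matrix stays nonsingular at `γ = 0`, because `ker L` is spanned by `1` and `Kᴾ ⬝ᵥ 1 ≠ 0`. Hence
`v` converges to the solution of `(L + 1 (Kᴾ)ᵀ) v = (∑ I) 1`, which is `((∑ I)/(∑ Kᴾ)) 1`.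
-/

open Matrix Finset Filter Topology

namespace Matrix

variable {ι K : Type*} [Fintype ι]

section Field

variable [Field K]

theorem IsSymm.sum_mulVec_eq_zero {L : Matrix ι ι K} (hL : L.IsSymm) (h1 : L *ᵥ 1 = 0)
    (x : ι → K) : ∑ i, (L *ᵥ x) i = 0 := by
  rw [← one_dotProduct, dotProduct_mulVec, ← mulVec_transpose, hL.eq, h1, zero_dotProduct]

variable [DecidableEq ι]

theorem dotProduct_eq_sum_of_smul_add_diagonal_mulVec_eq {L : Matrix ι ι K}
    (hL : ∀ x, ∑ i, (L *ᵥ x) i = 0) {c : K} {k v b : ι → K}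
    (hv : (c • L + diagonal k) *ᵥ v = b) : k ⬝ᵥ v = ∑ i, b i := by
  simp only [← hv, add_mulVec, smul_mulVec, mulVec_diagonal, Pi.add_apply, Pi.smul_apply,
    smul_eq_mul, sum_add_distrib, ← mul_sum, hL, mul_zero, zero_add, dotProduct]

theorem add_smul_diagonal_add_vecMulVec_mulVec {L : Matrix ι ι K} {γ : K} (hγ : γ ≠ 0)
    {k v b : ι → K} (hv : ((1 / γ) • L + diagonal k) *ᵥ v = b) :
    (L + γ • diagonal k + vecMulVec 1 k) *ᵥ v = γ • b + (k ⬝ᵥ v) • 1 := by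
  have : L + γ • diagonal k = γ • ((1 / γ) • L + diagonal k) := by
    rw [smul_add, smul_smul, mul_one_div_cancel hγ, one_smul]
  rw [add_mulVec, this, smul_mulVec, hv, vecMulVec_mulVec, op_smul_eq_smul]

variable [CharZero K]

theorem isUnit_det_add_vecMulVec_one {L : Matrix ι ι K} (hsum : ∀ x, ∑ i, (L *ᵥ x) i = 0)
    (hker : ∀ v, L *ᵥ v = 0 → ∃ c : K, v = fun _ => c) {w : ι → K} (hw : ∑ i, w i ≠ 0) :
    IsUnit (L + vecMulVec 1 w).det := by
  have : Nonempty ι := by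
    by_contra hempty
    exact hw (by simp [not_nonempty_iff.mp hempty])
  rw [isUnit_iff_ne_zero, Ne, ← exists_mulVec_eq_zero_iff]
  rintro ⟨x, hx0, hx⟩
  rw [add_mulVec, vecMulVec_mulVec, op_smul_eq_smul] at hx
  have hwx : w ⬝ᵥ x = 0 := by
    have := congrArg (fun y => ∑ i, y i) hx
    simpa [sum_add_distrib, hsum] using this
  obtain ⟨c, rfl⟩ := hker x (by simpa [hwx] using hx)
  have hc : c * ∑ i, w i = 0 := by
    simpa [dotProduct, mul_sum, mul_comm] using hwx
  exact hx0 (funext fun _ => (mul_eq_zero.mp hc).resolve_right hw)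

end Field

variable [DecidableEq ι]

theorem tendsto_of_mulVec_eq {𝕜 X : Type*} [NormedField 𝕜] [CompleteSpace 𝕜]
    [TopologicalSpace X] {A : X → Matrix ι ι 𝕜} {b v : X → ι → 𝕜} {x : X} {w : ι → 𝕜}
    {l : Filter X} (hl : l ≤ 𝓝 x) (hA : ContinuousAt A x) (hb : ContinuousAt b x)
    (hdet : IsUnit (A x).det)
    (hw : A x *ᵥ w = b x) (hv : ∀ᶠ y in l, A y *ᵥ v y = b y) : Tendsto v l (𝓝 w) := by
  have hinv : ContinuousAt (fun y => (A y)⁻¹) x :=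
    (continuousAt_matrix_inv _ (NormedRing.inverse_continuousAt hdet.unit)).comp hA
  have hsol : ContinuousAt (fun y => (A y)⁻¹ *ᵥ b y) x :=
    (continuous_fst.matrix_mulVec continuous_snd).continuousAt.comp
      (f := fun y => ((A y)⁻¹, b y)) (hinv.prodMk hb)
  have hdet_ev : ∀ᶠ y in 𝓝 x, (A y).det ≠ 0 :=
    (continuous_id.matrix_det.continuousAt.comp hA).eventually_ne hdet.ne_zero
  have hsol_x : (A x)⁻¹ *ᵥ b x = w := by
    rw [← hw, mulVec_mulVec, nonsing_inv_mul _ hdet, one_mulVec]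
  refine hsol_x ▸ (hsol.tendsto.mono_left hl).congr' ?_
  filter_upwards [hl hdet_ev, hv] with y hy hy'
  rw [← hy', mulVec_mulVec, nonsing_inv_mul _ hy.isUnit, one_mulVec]

end Matrix

/-- As the line resistances go to zero (`γ → 0⁺`, conductances scaled by `1/γ`), the
droop equilibrium `((1/γ)L + Kᴾ)⁻¹ I` converges to `((∑ I i)/(∑ Kᴾ i)) 1ₙ`. -/
theorem stmt6 (n : ℕ) (hn : 0 < n) (L : Matrix (Fin n) (Fin n) ℝ)
    (hLpsd : L.PosSemidef)
    (hker : ∀ v : Fin n → ℝ, L *ᵥ v = 0 ↔ ∃ c : ℝ, v = fun _ => c)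
    (kp : Fin n → ℝ) (hkp : ∀ i, 0 < kp i)
    (Iinj : Fin n → ℝ) :
    Tendsto (fun γ : ℝ => ((1 / γ) • L + Matrix.diagonal kp)⁻¹ *ᵥ Iinj)
      (nhdsWithin 0 (Set.Ioi 0))
      (nhds fun _ : Fin n => (∑ i, Iinj i) / (∑ i, kp i)) := by
  have hsum : ∀ x, ∑ i, (L *ᵥ x) i = 0 :=
    (isHermitian_iff_isSymm.mp hLpsd.isHermitian).sum_mulVec_eq_zero ((hker 1).mpr ⟨1, rfl⟩)
  have hkp_sum : 0 < ∑ i, kp i := sum_pos (fun i _ => hkp i) ⟨⟨0, hn⟩, mem_univ _⟩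
  have hA0 : IsUnit (L + (0 : ℝ) • diagonal kp + vecMulVec 1 kp).det := by
    simpa using isUnit_det_add_vecMulVec_one hsum (fun v => (hker v).mp) hkp_sum.ne'
  refine tendsto_of_mulVec_eq (A := fun γ => L + γ • diagonal kp + vecMulVec 1 kp)
    (b := fun γ => γ • Iinj + (∑ i, Iinj i) • 1) nhdsWithin_le_nhds (by fun_prop) (by fun_prop)
    hA0 ?_ ?_
  · have hconst : L *ᵥ (fun _ => (∑ i, Iinj i) / ∑ i, kp i) = 0 := (hker _).mpr ⟨_, rfl⟩
    simp only [zero_smul, add_zero, add_mulVec, hconst, vecMulVec_mulVec, op_smul_eq_smul, zero_add]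
    congr 1
    simp only [dotProduct, ← sum_mul]
    field_simp
  filter_upwards [self_mem_nhdsWithin] with γ (hγ : 0 < γ)
  have hM : IsUnit ((1 / γ) • L + diagonal kp).det := (isUnit_iff_isUnit_det _).mp
    (PosDef.posSemidef_add (hLpsd.smul (one_div_pos.mpr hγ).le)
      (posDef_diagonal_iff.mpr hkp)).isUnit
  have hv : ((1 / γ) • L + diagonal kp) *ᵥ (((1 / γ) • L + diagonal kp)⁻¹ *ᵥ Iinj) = Iinj := by
    rw [mulVec_mulVec, mul_nonsing_inv _ hM, one_mulVec]
  rw [add_smul_diagonal_add_vecMulVec_mulVec hγ.ne' hv,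
    dotProduct_eq_sum_of_smul_add_diagonal_mulVec_eq hsum hv]
end

section
/- For the deadband-PI closed-loop system with uniform voltage bounds, every trajectory converges to the set where all voltages lie within the operating range: lim_{t→∞} dist(V'(t), {V' : a ≤ V'_i ≤ b ∀i}) = 0. -/
/-!
Since the right-hand side `F(V, z)` of the voltage equation is linear and `ż = Φ(V)`, the velocity
`V̇` satisfies `V̈ = F(V̇, Φ(V))`, i.e. `C V̈ = -(L + K^P) V̇ - K^I Φ(V)`: a damped mechanical system
with potential `Σ kIᵢ ψ(Vᵢ)`, `ψ' = φ`. Its energy `½ Σ cᵢ V̇ᵢ² + Σ kIᵢ ψ(Vᵢ)` decreases at rate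
`V̇ ⬝ L V̇ + Σ kpᵢ V̇ᵢ²`, so it converges and bounds `V̇` and `Φ(V)`; hence `V̈` is bounded and
`(V̇, Φ(V))` is Lipschitz on `t ≥ 0`. Barbalat's lemma (if `g` has a limit and `g'` is uniformly
continuous, then `g' → 0`) applied to the energy gives `V̇ → 0`, and applied to `V̇` gives `V̈ → 0`.
Solving the equation for `Φ(V)` yields `Φ(V) → 0`, and `‖Φ(V)‖` bounds the sup-distance from `V`
to the box `[a, b]ⁿ`.
-/

open Matrix Finset Filter Set Topology Asymptotics

def deadband (a b x : ℝ) : ℝ := max (x - b) 0 - max (a - x) 0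

noncomputable def deadbandPotential (a b x : ℝ) : ℝ := (max (x - b) 0 ^ 2 + max (a - x) 0 ^ 2) / 2

theorem hasDerivAt_max_zero_sq (y : ℝ) : HasDerivAt (fun x : ℝ => max x 0 ^ 2) (2 * max y 0) y := by
  rcases lt_trichotomy y 0 with hy | rfl | hy
  · have : (fun x : ℝ => max x 0 ^ 2) =ᶠ[𝓝 y] fun _ => 0 := by
      filter_upwards [Iio_mem_nhds hy] with x hx
      simp [max_eq_right (le_of_lt (mem_Iio.mp hx))]
    simpa [max_eq_right hy.le] using (hasDerivAt_const y (0 : ℝ)).congr_of_eventuallyEq this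
  · rw [hasDerivAt_iff_isLittleO_nhds_zero]
    refine IsBigO.trans_isLittleO (IsBigO.of_bound 1 (Eventually.of_forall fun x => ?_))
      (isLittleO_pow_id one_lt_two)
    rcases le_total x 0 with hx | hx <;> simp [hx, sq_abs, sq_nonneg]
  · have : (fun x : ℝ => max x 0 ^ 2) =ᶠ[𝓝 y] fun x => x ^ 2 := by
      filter_upwards [Ioi_mem_nhds hy] with x hx
      simp [max_eq_left (le_of_lt (mem_Ioi.mp hx))]
    simpa [max_eq_left hy.le] using (hasDerivAt_pow 2 y).congr_of_eventuallyEq this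

theorem hasDerivAt_deadbandPotential (a b x : ℝ) :
    HasDerivAt (deadbandPotential a b) (deadband a b x) x := by
  have hb := (hasDerivAt_max_zero_sq (x - b)).comp x ((hasDerivAt_id x).sub_const b)
  have ha := (hasDerivAt_max_zero_sq (a - x)).comp x ((hasDerivAt_id x).const_sub a)
  exact ((hb.add ha).div_const 2).congr_deriv (by simp [deadband]; ring)

theorem deadbandPotential_nonneg (a b x : ℝ) : 0 ≤ deadbandPotential a b x := by
  unfold deadbandPotential; positivity

theorem deadband_sq_le (a b x : ℝ) : deadband a b x ^ 2 ≤ 2 * deadbandPotential a b x := by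
  unfold deadband deadbandPotential
  nlinarith [mul_nonneg (le_max_right (x - b) 0) (le_max_right (a - x) 0)]

theorem lipschitzWith_deadband (a b : ℝ) : LipschitzWith 2 (deadband a b) := by
  refine LipschitzWith.of_dist_le_mul fun x y => ?_
  have hb := abs_max_sub_max_le_abs (x - b) (y - b) 0
  have ha := abs_max_sub_max_le_abs (a - x) (a - y) 0
  rw [sub_sub_sub_cancel_right] at hb
  rw [sub_sub_sub_cancel_left, abs_sub_comm y x] at ha
  simp only [deadband, Real.dist_eq, NNReal.coe_ofNat]
  calc |max (x - b) 0 - max (a - x) 0 - (max (y - b) 0 - max (a - y) 0)|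
      = |(max (x - b) 0 - max (y - b) 0) - (max (a - x) 0 - max (a - y) 0)| := by ring_nf
    _ ≤ |max (x - b) 0 - max (y - b) 0| + |max (a - x) 0 - max (a - y) 0| := abs_sub _ _
    _ ≤ 2 * |x - y| := by linarith

theorem sub_projIcc_eq_deadband {a b : ℝ} (hab : a ≤ b) (x : ℝ) :
    x - projIcc a b hab x = deadband a b x := by
  simp only [projIcc, deadband, max_def, min_def]
  split_ifs <;> linarith

theorem LipschitzWith.postcomp {ι : Type*} [Fintype ι] {f : ℝ → ℝ} {K : NNReal}
    (hf : LipschitzWith K f) : LipschitzWith K fun v : ι → ℝ => f ∘ v :=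
  LipschitzWith.of_dist_le_mul fun v w => (dist_pi_le_iff (by positivity)).2 fun i =>
    (hf.dist_le_mul (v i) (w i)).trans (by gcongr; exact dist_le_pi_dist v w i)

theorem infDist_le_norm_deadband {ι : Type*} [Fintype ι] {a b : ℝ} (hab : a ≤ b) (v : ι → ℝ) :
    Metric.infDist v {x : ι → ℝ | ∀ i, a ≤ x i ∧ x i ≤ b} ≤ ‖deadband a b ∘ v‖ := by
  have hmem : (fun i => (projIcc a b hab (v i) : ℝ)) ∈ {x : ι → ℝ | ∀ i, a ≤ x i ∧ x i ≤ b} :=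
    fun i => (projIcc a b hab (v i)).2
  refine (Metric.infDist_le_dist_of_mem hmem).trans_eq ?_
  rw [dist_eq_norm]
  congr 1
  funext i
  exact sub_projIcc_eq_deadband hab (v i)

theorem tendsto_deriv_atTop_zero_of_uniformContinuousOn {E : Type*} [NormedAddCommGroup E]
    [NormedSpace ℝ E] {g g' : ℝ → E} {l : E} {t₀ : ℝ} (hg : ∀ t, HasDerivAt g (g' t) t)
    (hg' : UniformContinuousOn g' (Ici t₀)) (hl : Tendsto g atTop (𝓝 l)) :
    Tendsto g' atTop (𝓝 0) := by
  rw [Metric.tendsto_atTop]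
  intro ε hε
  obtain ⟨δ, hδ, hg'δ⟩ := Metric.uniformContinuousOn_iff.mp hg' (ε / 2) (half_pos hε)
  obtain ⟨h, hh, hhδ⟩ : ∃ h, 0 < h ∧ h < δ := ⟨δ / 2, half_pos hδ, half_lt_self hδ⟩
  have hinc : Tendsto (fun t => g (t + h) - g t) atTop (𝓝 0) := by
    simpa using (hl.comp (tendsto_atTop_add_const_right _ h tendsto_id)).sub hl
  obtain ⟨T, hT⟩ := Metric.tendsto_atTop.mp hinc (h * (ε / 2)) (by positivity)
  refine ⟨max T t₀, fun t ht => ?_⟩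
  have htT : T ≤ t := le_of_max_le_left ht
  have ht₀ : t₀ ≤ t := le_of_max_le_right ht
  -- mean value theorem for `u ↦ g u - u • g' t` on `[t, t + h]`
  have hmvt : ‖(g (t + h) - (t + h) • g' t) - (g t - t • g' t)‖ ≤ ε / 2 * (t + h - t) := by
    refine norm_image_sub_le_of_norm_deriv_le_segment' (f' := fun u => g' u - g' t)
      (fun u _ => ((hg u).sub ((hasDerivAt_id u).smul_const (g' t))).hasDerivWithinAt.congr_deriv
        (by simp)) (fun u hu => ?_) _ (right_mem_Icc.mpr (by linarith))
    rw [← dist_eq_norm]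
    refine (hg'δ u (ht₀.trans hu.1) t ht₀ ?_).le
    rw [Real.dist_eq, abs_of_nonneg (by linarith [hu.1])]
    linarith [hu.2]
  have hinc_t : ‖g (t + h) - g t‖ < h * (ε / 2) := by simpa using hT t htT
  have key : h • g' t = (g (t + h) - g t) - ((g (t + h) - (t + h) • g' t) - (g t - t • g' t)) := by
    rw [add_smul]; abel
  have : h * ‖g' t‖ < h * ε := by
    calc h * ‖g' t‖ = ‖h • g' t‖ := by rw [norm_smul, Real.norm_of_nonneg hh.le]
      _ ≤ ‖g (t + h) - g t‖ + ‖(g (t + h) - (t + h) • g' t) - (g t - t • g' t)‖ := by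
        rw [key]; exact norm_sub_le _ _
      _ < h * (ε / 2) + ε / 2 * (t + h - t) := add_lt_add_of_lt_of_le hinc_t hmvt
      _ = h * ε := by ring
  rw [dist_zero_right]
  exact lt_of_mul_lt_mul_left this hh.le

section ClosedLoop

variable {ι : Type*} [Fintype ι]

noncomputable def closedLoopField [DecidableEq ι] (L : Matrix ι ι ℝ) (c kp kI v w : ι → ℝ) :
    ι → ℝ :=
  -(diagonal (fun i => (c i)⁻¹) *ᵥ (L *ᵥ v)) - diagonal (fun i => (c i)⁻¹) *ᵥ (diagonal kp *ᵥ v)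
    - diagonal (fun i => (c i)⁻¹) *ᵥ (diagonal kI *ᵥ w)

noncomputable def closedLoopEnergy (c kI : ι → ℝ) (a b : ℝ) (v d : ι → ℝ) : ℝ :=
  ∑ i, (c i * d i ^ 2 / 2 + kI i * deadbandPotential a b (v i))

noncomputable def closedLoopDissipation (L : Matrix ι ι ℝ) (kp d : ι → ℝ) : ℝ :=
  d ⬝ᵥ (L *ᵥ d) + ∑ i, kp i * d i ^ 2

theorem HasDerivAt.mulVec {m : Type*} [Fintype m] {f : ℝ → ι → ℝ} {f' : ι → ℝ} {t : ℝ}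
    (M : Matrix m ι ℝ) (hf : HasDerivAt f f' t) : HasDerivAt (fun s => M *ᵥ f s) (M *ᵥ f') t :=
  M.mulVecLin.toContinuousLinearMap.hasFDerivAt.comp_hasDerivAt t hf

theorem norm_le_sum_sqrt_of_sum_mul_sq_le {w v : ι → ℝ} {R : ℝ} (hw : ∀ i, 0 < w i)
    (h : ∑ i, w i * v i ^ 2 ≤ R) : ‖v‖ ≤ ∑ i, √(R / w i) := by
  refine (pi_norm_le_iff_of_nonneg (sum_nonneg fun i _ => Real.sqrt_nonneg _)).2 fun i => ?_
  have hi : v i ^ 2 ≤ R / w i := by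
    rw [le_div_iff₀' (hw i)]
    exact (single_le_sum (fun j _ => mul_nonneg (hw j).le (sq_nonneg (v j))) (mem_univ i)).trans h
  calc ‖v i‖ = √(v i ^ 2) := by rw [Real.norm_eq_abs, Real.sqrt_sq_eq_abs]
    _ ≤ √(R / w i) := Real.sqrt_le_sqrt hi
    _ ≤ ∑ j, √(R / w j) :=
      single_le_sum (f := fun j => √(R / w j)) (fun j _ => Real.sqrt_nonneg _) (mem_univ i)

variable {L : Matrix ι ι ℝ} {c kp kI : ι → ℝ} {a b : ℝ}

theorem closedLoopField_apply [DecidableEq ι] (v w : ι → ℝ) (i : ι) :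
    closedLoopField L c kp kI v w i = -((L *ᵥ v) i + kp i * v i + kI i * w i) / c i := by
  simp only [closedLoopField, Pi.sub_apply, Pi.neg_apply, mulVec_diagonal]
  ring

theorem continuous_closedLoopField [DecidableEq ι] :
    Continuous fun p : (ι → ℝ) × (ι → ℝ) => closedLoopField L c kp kI p.1 p.2 := by
  unfold closedLoopField; fun_prop

theorem HasDerivAt.closedLoopField [DecidableEq ι] {v w : ℝ → ι → ℝ} {v' w' : ι → ℝ} {t : ℝ}
    (hv : HasDerivAt v v' t) (hw : HasDerivAt w w' t) :
    HasDerivAt (fun s => _root_.closedLoopField L c kp kI (v s) (w s))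
      (_root_.closedLoopField L c kp kI v' w') t :=
  (((hv.mulVec L).mulVec _).neg.sub ((hv.mulVec _).mulVec _)).sub ((hw.mulVec _).mulVec _)

theorem closedLoopDissipation_nonneg (hL : L.PosSemidef) (hkp : ∀ i, 0 ≤ kp i) (d : ι → ℝ) :
    0 ≤ closedLoopDissipation L kp d := by
  have := hL.dotProduct_mulVec_nonneg d
  simp only [star_trivial] at this
  exact add_nonneg this (sum_nonneg fun i _ => mul_nonneg (hkp i) (sq_nonneg _))

theorem sum_mul_sq_le_closedLoopDissipation (hL : L.PosSemidef) (d : ι → ℝ) :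
    ∑ i, kp i * d i ^ 2 ≤ closedLoopDissipation L kp d := by
  have := hL.dotProduct_mulVec_nonneg d
  simp only [star_trivial] at this
  exact le_add_of_nonneg_left this

theorem sum_mul_sq_le_closedLoopEnergy (hkI : ∀ i, 0 ≤ kI i) (v d : ι → ℝ) :
    ∑ i, c i * d i ^ 2 ≤ 2 * closedLoopEnergy c kI a b v d := by
  rw [closedLoopEnergy, mul_sum]
  exact sum_le_sum fun i _ => by nlinarith [mul_nonneg (hkI i) (deadbandPotential_nonneg a b (v i))]

theorem sum_mul_deadband_sq_le_closedLoopEnergy (hc : ∀ i, 0 ≤ c i) (hkI : ∀ i, 0 ≤ kI i)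
    (v d : ι → ℝ) : ∑ i, kI i * deadband a b (v i) ^ 2 ≤ 2 * closedLoopEnergy c kI a b v d := by
  rw [closedLoopEnergy, mul_sum]
  exact sum_le_sum fun i _ => by
    nlinarith [mul_le_mul_of_nonneg_left (deadband_sq_le a b (v i)) (hkI i),
      mul_nonneg (hc i) (sq_nonneg (d i))]

theorem closedLoopEnergy_nonneg (hc : ∀ i, 0 ≤ c i) (hkI : ∀ i, 0 ≤ kI i) (v d : ι → ℝ) :
    0 ≤ closedLoopEnergy c kI a b v d :=
  sum_nonneg fun i _ => add_nonneg (by have := hc i; positivity)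
    (mul_nonneg (hkI i) (deadbandPotential_nonneg a b (v i)))

theorem hasDerivAt_closedLoopEnergy [DecidableEq ι] {V D : ℝ → ι → ℝ} {t : ℝ}
    (hc : ∀ i, c i ≠ 0) (hV : HasDerivAt V (D t) t)
    (hD : HasDerivAt D (closedLoopField L c kp kI (D t) (deadband a b ∘ V t)) t) :
    HasDerivAt (fun s => closedLoopEnergy c kI a b (V s) (D s))
      (-closedLoopDissipation L kp (D t)) t := by
  have hterm : ∀ i, HasDerivAt (fun s => c i * D s i ^ 2 / 2 + kI i * deadbandPotential a b (V s i))
      (D t i * (c i * closedLoopField L c kp kI (D t) (deadband a b ∘ V t) i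
        + kI i * deadband a b (V t i))) t := fun i => by
    have hDi := hasDerivAt_pi.1 hD i
    have hVi := (hasDerivAt_deadbandPotential a b (V t i)).comp t (hasDerivAt_pi.1 hV i)
    exact (((hDi.fun_pow 2).const_mul (c i)).div_const 2).add (hVi.const_mul (kI i))
      |>.congr_deriv (by push_cast; ring)
  refine (HasDerivAt.fun_sum fun i _ => hterm i).congr_deriv ?_
  simp only [closedLoopField_apply, mul_div_cancel₀ _ (hc _), closedLoopDissipation, dotProduct,
    Function.comp_apply]
  rw [neg_add, ← sum_neg_distrib, ← sum_neg_distrib, ← sum_add_distrib]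
  exact sum_congr rfl fun i _ => by ring

end ClosedLoop

section Trajectory

variable {ι : Type*} [Fintype ι] [DecidableEq ι] {L : Matrix ι ι ℝ} {c kp kI : ι → ℝ} {a b : ℝ}
  {V D : ℝ → ι → ℝ}

theorem eq_of_closedLoopField (hc : ∀ i, c i ≠ 0) (hkI : ∀ i, kI i ≠ 0) (v w : ι → ℝ) :
    w = fun i => -(c i * closedLoopField L c kp kI v w i + (L *ᵥ v) i + kp i * v i) / kI i := by
  funext i
  rw [closedLoopField_apply, mul_div_cancel₀ _ (hc i), eq_div_iff (hkI i)]
  ring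

theorem antitone_closedLoopEnergy (hL : L.PosSemidef) (hc : ∀ i, c i ≠ 0) (hkp : ∀ i, 0 ≤ kp i)
    (hV : ∀ t, HasDerivAt V (D t) t)
    (hD : ∀ t, HasDerivAt D (closedLoopField L c kp kI (D t) (deadband a b ∘ V t)) t) :
    Antitone fun t => closedLoopEnergy c kI a b (V t) (D t) := by
  have hE t := hasDerivAt_closedLoopEnergy hc (hV t) (hD t)
  refine antitone_of_deriv_nonpos (fun t => (hE t).differentiableAt) fun t => ?_
  rw [(hE t).deriv, neg_nonpos]
  exact closedLoopDissipation_nonneg hL hkp _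

theorem exists_norm_le_closedLoop (hL : L.PosSemidef) (hc : ∀ i, 0 < c i) (hkp : ∀ i, 0 ≤ kp i)
    (hkI : ∀ i, 0 < kI i) (hV : ∀ t, HasDerivAt V (D t) t)
    (hD : ∀ t, HasDerivAt D (closedLoopField L c kp kI (D t) (deadband a b ∘ V t)) t) :
    ∃ B, ∀ t ∈ Ici (0 : ℝ), ‖(D t, deadband a b ∘ V t)‖ ≤ B := by
  set E₀ := closedLoopEnergy c kI a b (V 0) (D 0)
  have hsqrt (w : ι → ℝ) : 0 ≤ ∑ i, √(2 * E₀ / w i) := sum_nonneg fun i _ => Real.sqrt_nonneg _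
  refine ⟨∑ i, √(2 * E₀ / c i) + ∑ i, √(2 * E₀ / kI i), fun t ht => ?_⟩
  have hE : closedLoopEnergy c kI a b (V t) (D t) ≤ E₀ :=
    antitone_closedLoopEnergy hL (fun i => (hc i).ne') hkp hV hD ht
  rw [Prod.norm_def]
  refine max_le
    ((norm_le_sum_sqrt_of_sum_mul_sq_le hc ?_).trans (le_add_of_nonneg_right (hsqrt kI)))
    ((norm_le_sum_sqrt_of_sum_mul_sq_le hkI ?_).trans (le_add_of_nonneg_left (hsqrt c)))
  · exact (sum_mul_sq_le_closedLoopEnergy (fun i => (hkI i).le) (V t) (D t)).trans (by linarith)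
  · exact (sum_mul_deadband_sq_le_closedLoopEnergy (fun i => (hc i).le) (fun i => (hkI i).le)
      (V t) (D t)).trans (by linarith)

theorem exists_lipschitzOnWith_closedLoop (hL : L.PosSemidef) (hc : ∀ i, 0 < c i)
    (hkp : ∀ i, 0 ≤ kp i) (hkI : ∀ i, 0 < kI i) (hV : ∀ t, HasDerivAt V (D t) t)
    (hD : ∀ t, HasDerivAt D (closedLoopField L c kp kI (D t) (deadband a b ∘ V t)) t) :
    ∃ K, LipschitzOnWith K (fun t => (D t, deadband a b ∘ V t)) (Ici 0) := by
  obtain ⟨B, hB⟩ := exists_norm_le_closedLoop hL hc hkp hkI hV hD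
  obtain ⟨C, hC⟩ := (isCompact_closedBall (0 : (ι → ℝ) × (ι → ℝ)) B).exists_bound_of_continuousOn
    (continuous_closedLoopField (L := L) (c := c) (kp := kp) (kI := kI)).continuousOn
  have hDlip : LipschitzOnWith C.toNNReal D (Ici 0) :=
    (convex_Ici 0).lipschitzOnWith_of_nnnorm_hasDerivWithin_le (fun t _ => (hD t).hasDerivWithinAt)
      fun t ht => by
        simpa using Real.toNNReal_le_toNNReal (hC _ (mem_closedBall_zero_iff.2 (hB t ht)))
  have hVlip : LipschitzOnWith B.toNNReal V (Ici 0) :=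
    (convex_Ici 0).lipschitzOnWith_of_nnnorm_hasDerivWithin_le (fun t _ => (hV t).hasDerivWithinAt)
      fun t ht => by simpa using Real.toNNReal_le_toNNReal ((norm_fst_le _).trans (hB t ht))
  exact ⟨_, hDlip.prodMk
    ((lipschitzWith_deadband a b).postcomp.comp_lipschitzOnWith hVlip)⟩

theorem uniformContinuousOn_comp_closedLoop {E : Type*} [PseudoMetricSpace E]
    {f : (ι → ℝ) × (ι → ℝ) → E} (hf : Continuous f) (hL : L.PosSemidef) (hc : ∀ i, 0 < c i)
    (hkp : ∀ i, 0 ≤ kp i) (hkI : ∀ i, 0 < kI i) (hV : ∀ t, HasDerivAt V (D t) t)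
    (hD : ∀ t, HasDerivAt D (closedLoopField L c kp kI (D t) (deadband a b ∘ V t)) t) :
    UniformContinuousOn (fun t => f (D t, deadband a b ∘ V t)) (Ici 0) := by
  obtain ⟨B, hB⟩ := exists_norm_le_closedLoop hL hc hkp hkI hV hD
  obtain ⟨K, hK⟩ := exists_lipschitzOnWith_closedLoop hL hc hkp hkI hV hD
  exact ((isCompact_closedBall 0 B).uniformContinuousOn_of_continuous hf.continuousOn).comp
    hK.uniformContinuousOn fun t ht => mem_closedBall_zero_iff.2 (hB t ht)

theorem tendsto_velocity_closedLoop (hL : L.PosSemidef) (hc : ∀ i, 0 < c i)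
    (hkp : ∀ i, 0 < kp i) (hkI : ∀ i, 0 < kI i) (hV : ∀ t, HasDerivAt V (D t) t)
    (hD : ∀ t, HasDerivAt D (closedLoopField L c kp kI (D t) (deadband a b ∘ V t)) t) :
    Tendsto D atTop (𝓝 0) := by
  have hkp' i := (hkp i).le
  have hlim : Tendsto (fun t => closedLoopEnergy c kI a b (V t) (D t)) atTop
      (𝓝 (⨅ t, closedLoopEnergy c kI a b (V t) (D t))) :=
    tendsto_atTop_ciInf (antitone_closedLoopEnergy hL (fun i => (hc i).ne') hkp' hV hD)
      ⟨0, forall_mem_range.2 fun t =>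
        closedLoopEnergy_nonneg (fun i => (hc i).le) (fun i => (hkI i).le) _ _⟩
  have hdiss : Tendsto (fun t => -closedLoopDissipation L kp (D t)) atTop (𝓝 0) :=
    tendsto_deriv_atTop_zero_of_uniformContinuousOn
      (fun t => hasDerivAt_closedLoopEnergy (fun i => (hc i).ne') (hV t) (hD t))
      (uniformContinuousOn_comp_closedLoop (f := fun p => -closedLoopDissipation L kp p.1)
        (by unfold closedLoopDissipation; fun_prop) hL hc hkp' hkI hV hD) hlim
  have hbound : Tendsto (fun t => ∑ i, √(closedLoopDissipation L kp (D t) / kp i)) atTop (𝓝 0) := by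
    simpa using tendsto_finsetSum _ fun i _ => (hdiss.neg.div_const (kp i)).sqrt
  exact squeeze_zero_norm (fun t =>
    norm_le_sum_sqrt_of_sum_mul_sq_le hkp (sum_mul_sq_le_closedLoopDissipation hL _)) hbound

theorem tendsto_deadband_closedLoop (hL : L.PosSemidef) (hc : ∀ i, 0 < c i)
    (hkp : ∀ i, 0 < kp i) (hkI : ∀ i, 0 < kI i) (hV : ∀ t, HasDerivAt V (D t) t)
    (hD : ∀ t, HasDerivAt D (closedLoopField L c kp kI (D t) (deadband a b ∘ V t)) t) :
    Tendsto (fun t => deadband a b ∘ V t) atTop (𝓝 0) := by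
  have hD₀ := tendsto_velocity_closedLoop hL hc hkp hkI hV hD
  have hA₀ : Tendsto (fun t => closedLoopField L c kp kI (D t) (deadband a b ∘ V t)) atTop (𝓝 0) :=
    tendsto_deriv_atTop_zero_of_uniformContinuousOn hD
      (uniformContinuousOn_comp_closedLoop continuous_closedLoopField hL hc (fun i => (hkp i).le)
        hkI hV hD) hD₀
  have hG : Continuous fun p : (ι → ℝ) × (ι → ℝ) =>
      fun i => -(c i * p.1 i + (L *ᵥ p.2) i + kp i * p.2 i) / kI i := by fun_prop
  refine (((hG.tendsto (0, 0)).comp (hA₀.prodMk_nhds hD₀)).congr fun t =>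
    (eq_of_closedLoopField (fun i => (hc i).ne') (fun i => (hkI i).ne') (D t) _).symm).mono_right
    (le_of_eq (congrArg 𝓝 (funext fun i => by simp)))

end Trajectory

theorem stmt14_general (n : ℕ) (L : Matrix (Fin n) (Fin n) ℝ)
    (hLpsd : L.PosSemidef)
    (c kp kI : Fin n → ℝ) (hc : ∀ i, 0 < c i) (hkp : ∀ i, 0 < kp i)
    (hkI : ∀ i, 0 < kI i)
    (a b : ℝ) (ha : a ≤ 0) (hb : 0 ≤ b)
    (V z : ℝ → Fin n → ℝ)
    (hV : ∀ t : ℝ, HasDerivAt V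
        (-(Matrix.diagonal (fun i => (c i)⁻¹) *ᵥ (L *ᵥ V t))
          - Matrix.diagonal (fun i => (c i)⁻¹) *ᵥ (Matrix.diagonal kp *ᵥ V t)
          - Matrix.diagonal (fun i => (c i)⁻¹) *ᵥ (Matrix.diagonal kI *ᵥ z t)) t)
    (hz : ∀ t : ℝ, HasDerivAt z
        (fun i => max (V t i - b) 0 - max (a - V t i) 0) t) :
    Tendsto (fun t => Metric.infDist (V t) {x : Fin n → ℝ | ∀ i, a ≤ x i ∧ x i ≤ b})
      atTop (nhds 0) := by
  have hΦ : Tendsto (fun t => deadband a b ∘ V t) atTop (𝓝 0) :=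
    tendsto_deadband_closedLoop (D := fun t => closedLoopField L c kp kI (V t) (z t))
      hLpsd hc hkp hkI hV fun t => (hV t).closedLoopField (hz t)
  exact squeeze_zero (fun t => Metric.infDist_nonneg)
    (fun t => infDist_le_norm_deadband (ha.trans hb) (V t))
    (tendsto_zero_iff_norm_tendsto_zero.1 hΦ)

/-- Every trajectory of the deadband-PI closed loop with uniform voltage bounds
converges to the set where all voltages lie within the operating range `[a,b]`. -/
theorem stmt14 (n : ℕ) (L : Matrix (Fin n) (Fin n) ℝ)
    (hLpsd : L.PosSemidef)
    (hker : ∀ v : Fin n → ℝ, L *ᵥ v = 0 ↔ ∃ c : ℝ, v = fun _ => c)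
    (c kp kI : Fin n → ℝ) (hc : ∀ i, 0 < c i) (hkp : ∀ i, 0 < kp i)
    (hkI : ∀ i, 0 < kI i)
    (a b : ℝ) (ha : a ≤ 0) (hb : 0 ≤ b)
    (V z : ℝ → Fin n → ℝ)
    (hV : ∀ t : ℝ, HasDerivAt V
        (-(Matrix.diagonal (fun i => (c i)⁻¹) *ᵥ (L *ᵥ V t))
          - Matrix.diagonal (fun i => (c i)⁻¹) *ᵥ (Matrix.diagonal kp *ᵥ V t)
          - Matrix.diagonal (fun i => (c i)⁻¹) *ᵥ (Matrix.diagonal kI *ᵥ z t)) t)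
    (hz : ∀ t : ℝ, HasDerivAt z
        (fun i => max (V t i - b) 0 - max (a - V t i) 0) t) :
    Tendsto (fun t => Metric.infDist (V t) {x : Fin n → ℝ | ∀ i, a ≤ x i ∧ x i ≤ b})
      atTop (nhds 0) :=
  stmt14_general n L hLpsd c kp kI hc hkp hkI a b ha hb V z hV hz
end

section
/- If A is a real symmetric n×n matrix depending on a parameter γ > 0 as A(γ) = (1/γ)L + K with L symmetric PSD of rank n-1 (kernel spanned by 1_n) and K positive definite diagonal, then as γ → 0+, the smallest eigenvalue of A(γ) converges to (1_n^T K 1_n)/n = (Σ_i K_i)/n, and all other eigenvalues diverge to +∞. -/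
/-!
Write `A(γ) = γ⁻¹ L + K`. Testing `A(γ)` on the constant vector gives `λ_min ≤ (∑ Kᵢ)/n`. Since
`ker L` is spanned by `1`, `L` has a spectral gap `δ > 0` on the hyperplane `∑ x = 0`. A unit
vector `x = a • 1 + r` with `∑ r = 0` then has `xᵀ A(γ) x ≥ ‖r‖² δ/γ + xᵀ K x`, and `xᵀ K x` is
`n a² (∑ Kᵢ)/n` up to an error of order `‖r‖`; as `δ/γ → ∞` this forces
`λ_min ≥ (1 - t)(∑ Kᵢ)/n` for every `t > 0` and small `γ`. Any two orthonormal eigenvectors span a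
plane that meets the hyperplane, where `A(γ) ≥ δ/γ`, so every eigenvalue but the smallest is at
least `δ/γ`.
-/

open Matrix Finset Filter

lemma Matrix.csInf_spectrum_le {ι : Type*} [Fintype ι] [DecidableEq ι] {A : Matrix ι ι ℝ}
    {μ : ℝ} (hμ : μ ∈ spectrum ℝ A) : sInf (spectrum ℝ A) ≤ μ :=
  csInf_le finite_real_spectrum.bddBelow hμ

namespace Matrix.IsHermitian

variable {ι : Type*} [Fintype ι] [DecidableEq ι] {A : Matrix ι ι ℝ}

lemma dotProduct_eigenvectorBasis (hA : A.IsHermitian) (i j : ι) :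
    ⇑(hA.eigenvectorBasis i) ⬝ᵥ ⇑(hA.eigenvectorBasis j) = if i = j then 1 else 0 := by
  rw [dotProduct_comm, ← star_trivial (⇑(hA.eigenvectorBasis i)),
    ← EuclideanSpace.inner_eq_star_dotProduct]
  exact orthonormal_iff_ite.mp hA.eigenvectorBasis.orthonormal i j

lemma eigenvalues_eq_dotProduct (hA : A.IsHermitian) (i : ι) :
    hA.eigenvalues i = ⇑(hA.eigenvectorBasis i) ⬝ᵥ A *ᵥ ⇑(hA.eigenvectorBasis i) := by
  simpa using hA.eigenvalues_eq i

lemma exists_dotProduct_mulVec_eq_of_mem_spectrum (hA : A.IsHermitian) {μ : ℝ}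
    (hμ : μ ∈ spectrum ℝ A) : ∃ v : ι → ℝ, v ⬝ᵥ v = 1 ∧ v ⬝ᵥ A *ᵥ v = μ := by
  obtain ⟨i, rfl⟩ := hA.spectrum_real_eq_range_eigenvalues ▸ hμ
  exact ⟨_, by simp [hA.dotProduct_eigenvectorBasis], (hA.eigenvalues_eq_dotProduct i).symm⟩

lemma mul_dotProduct_self_le (hA : A.IsHermitian) {m : ℝ} (hm : ∀ μ ∈ spectrum ℝ A, m ≤ μ)
    (x : ι → ℝ) : m * (x ⬝ᵥ x) ≤ x ⬝ᵥ A *ᵥ x := by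
  have hpsd : (A - algebraMap ℝ _ m).PosSemidef := by
    refine posSemidef_iff_isHermitian_and_spectrum_nonneg.2
      ⟨hA.sub (isHermitian_diagonal _), ?_⟩
    rw [← spectrum.sub_singleton_eq]
    rintro _ ⟨μ, hμ, _, rfl, rfl⟩
    exact sub_nonneg.2 (hm μ hμ)
  simpa [sub_mulVec, Algebra.algebraMap_eq_smul_one, smul_mulVec, sub_nonneg]
    using hpsd.dotProduct_mulVec_nonneg x

lemma csInf_spectrum_mem [Nonempty ι] (hA : A.IsHermitian) :
    sInf (spectrum ℝ A) ∈ spectrum ℝ A :=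
  Set.Nonempty.csInf_mem ⟨_, hA.eigenvalues_mem_spectrum_real (Classical.arbitrary ι)⟩
    finite_real_spectrum

/-- The plane spanned by the eigenvectors `i` and `j` meets the hyperplane `u ⬝ᵥ x = 0`. -/
lemma le_eigenvalues_of_le_on_hyperplane (hA : A.IsHermitian) (u : ι → ℝ) {c : ℝ}
    (hc : ∀ x, u ⬝ᵥ x = 0 → c * (x ⬝ᵥ x) ≤ x ⬝ᵥ A *ᵥ x) {i j : ι} (hij : i ≠ j)
    (hji : hA.eigenvalues j ≤ hA.eigenvalues i) : c ≤ hA.eigenvalues i := by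
  set v := ⇑(hA.eigenvectorBasis i)
  set w := ⇑(hA.eigenvectorBasis j)
  have hv : v ⬝ᵥ v = 1 := by simp [v, hA.dotProduct_eigenvectorBasis]
  by_cases hu : u ⬝ᵥ v = 0
  · rw [hA.eigenvalues_eq_dotProduct]
    simpa [hv] using hc v hu
  set y := (u ⬝ᵥ v) • w - (u ⬝ᵥ w) • v
  have hy : u ⬝ᵥ y = 0 := by simp only [y, dotProduct_sub, dotProduct_smul, smul_eq_mul]; ring
  have hyy : y ⬝ᵥ y = (u ⬝ᵥ v) ^ 2 + (u ⬝ᵥ w) ^ 2 := by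
    simp only [y, v, w, dotProduct_sub, sub_dotProduct, dotProduct_smul, smul_dotProduct,
      hA.dotProduct_eigenvectorBasis, if_pos, if_neg hij, if_neg hij.symm, smul_eq_mul]
    ring
  have hyAy : y ⬝ᵥ A *ᵥ y =
      (u ⬝ᵥ v) ^ 2 * hA.eigenvalues j + (u ⬝ᵥ w) ^ 2 * hA.eigenvalues i := by
    simp only [y, v, w, mulVec_sub, mulVec_smul, hA.mulVec_eigenvectorBasis, dotProduct_sub,
      sub_dotProduct, dotProduct_smul, smul_dotProduct, hA.dotProduct_eigenvectorBasis, if_pos,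
      if_neg hij, if_neg hij.symm, smul_eq_mul]
    ring
  have hpos : 0 < y ⬝ᵥ y := by rw [hyy]; positivity
  refine le_of_mul_le_mul_right ((hc y hy).trans ?_) hpos
  rw [hyAy, hyy]
  nlinarith [mul_le_mul_of_nonneg_left hji (sq_nonneg (u ⬝ᵥ v))]

lemma smul_add_diagonal {ι : Type*} [DecidableEq ι] {L : Matrix ι ι ℝ} (hL : L.IsHermitian)
    (s : ℝ) (k : ι → ℝ) : (s • L + diagonal k).IsHermitian :=
  isHermitian_iff_isSymm.2 (((isHermitian_iff_isSymm.1 hL).smul s).add (isSymm_diagonal k))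

end Matrix.IsHermitian

section ConstantKernel

variable {ι : Type*} [Fintype ι] {L : Matrix ι ι ℝ}

lemma dotProduct_mulVec_sub_const (hL : L.IsHermitian) (hL1 : ∀ c : ℝ, L *ᵥ (fun _ => c) = 0)
    (x : ι → ℝ) (c : ℝ) :
    (x - fun _ => c) ⬝ᵥ L *ᵥ (x - fun _ => c) = x ⬝ᵥ L *ᵥ x := by
  have hcL : (fun _ => c) ⬝ᵥ L *ᵥ x = 0 := by
    rw [dotProduct_mulVec, ← mulVec_transpose, (isHermitian_iff_isSymm.1 hL).eq, hL1,
      zero_dotProduct]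
  rw [mulVec_sub, hL1, sub_zero, sub_dotProduct, hcL, sub_zero]

/-- `L` plus the all-ones matrix is positive definite; its smallest eigenvalue is the gap. -/
lemma exists_pos_mul_le_of_sum_eq_zero [DecidableEq ι] [Nonempty ι] (hL : L.PosSemidef)
    (hker : ∀ v, L *ᵥ v = 0 → ∃ c : ℝ, v = fun _ => c) :
    ∃ δ > 0, ∀ x : ι → ℝ, ∑ i, x i = 0 → δ * (x ⬝ᵥ x) ≤ x ⬝ᵥ L *ᵥ x := by
  set M := L + of fun _ _ => 1
  have hMx : ∀ x, x ⬝ᵥ M *ᵥ x = x ⬝ᵥ L *ᵥ x + (∑ i, x i) ^ 2 := fun x => by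
    rw [add_mulVec, dotProduct_add]
    congr 1
    simp [mulVec, dotProduct, sq, Finset.sum_mul]
  have hLx : ∀ x, 0 ≤ x ⬝ᵥ L *ᵥ x := fun x => by simpa using hL.dotProduct_mulVec_nonneg x
  have hM : M.IsHermitian :=
    hL.isHermitian.add (isHermitian_iff_isSymm.2 (IsSymm.ext fun _ _ => rfl))
  have hpos : ∀ μ ∈ spectrum ℝ M, 0 < μ := by
    intro μ hμ
    obtain ⟨v, hv, rfl⟩ := hM.exists_dotProduct_mulVec_eq_of_mem_spectrum hμ
    rw [hMx]
    refine lt_of_le_of_ne (add_nonneg (hLx v) (sq_nonneg _)) fun h0 => ?_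
    have hLv : v ⬝ᵥ L *ᵥ v = 0 := by nlinarith [hLx v, sq_nonneg (∑ i, v i)]
    have hsum : ∑ i, v i = 0 := by nlinarith [hLx v, sq_nonneg (∑ i, v i)]
    obtain ⟨c, rfl⟩ := hker v ((hL.dotProduct_mulVec_zero_iff v).1 (by simpa using hLv))
    have hc : c = 0 := by simpa using hsum
    simp [hc] at hv
  refine ⟨_, hpos _ hM.csInf_spectrum_mem, fun x hx => ?_⟩
  simpa [hMx, hx] using hM.mul_dotProduct_self_le (fun μ => csInf_spectrum_le) x

end ConstantKernel

section Mean

variable {ι : Type*} [Fintype ι] [Nonempty ι]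

lemma sum_sub_mean_eq_zero (x : ι → ℝ) :
    ∑ i, (x i - (∑ j, x j) / Fintype.card ι) = 0 := by
  simp [Finset.sum_sub_distrib, mul_div_cancel₀, Fintype.card_ne_zero]

lemma sum_sub_mean_sq (x : ι → ℝ) :
    ∑ i, (x i - (∑ j, x j) / Fintype.card ι) ^ 2
      = x ⬝ᵥ x - Fintype.card ι * ((∑ j, x j) / Fintype.card ι) ^ 2 := by
  set a := (∑ j, x j) / Fintype.card ι
  have hsum : ∑ j, x j = Fintype.card ι * a := by
    rw [mul_div_cancel₀ _ (Nat.cast_ne_zero.2 Fintype.card_ne_zero)]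
  have hxx : x ⬝ᵥ x = ∑ i, x i ^ 2 := by simp only [dotProduct, sq]
  simp only [sub_sq, Finset.sum_add_distrib, Finset.sum_sub_distrib, ← Finset.sum_mul,
    ← Finset.mul_sum, Finset.sum_const, Finset.card_univ, nsmul_eq_mul, hxx, hsum]
  ring

end Mean

/-- Weighted sum of `(1 - t) c² - (x i - c)² / t ≤ x i ²`, with each `k i` bounded by `∑ k`. -/
lemma le_sum_mul_sq {ι : Type*} [Fintype ι] {k : ι → ℝ} (hk : ∀ i, 0 ≤ k i) (x : ι → ℝ)
    (c : ℝ) {t : ℝ} (ht : 0 < t) :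
    (1 - t) * c ^ 2 * ∑ i, k i - (∑ i, k i) / t * ∑ i, (x i - c) ^ 2 ≤ ∑ i, k i * x i ^ 2 := by
  rw [Finset.mul_sum, Finset.mul_sum, ← Finset.sum_sub_distrib]
  refine Finset.sum_le_sum fun i _ => ?_
  have hki : k i ≤ ∑ j, k j := Finset.single_le_sum (fun j _ => hk j) (Finset.mem_univ i)
  have hsq : (1 - t) * c ^ 2 - (x i - c) ^ 2 / t ≤ x i ^ 2 := by
    rw [sub_le_comm, le_div_iff₀ ht]
    nlinarith [sq_nonneg (t * c + (x i - c))]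
  calc (1 - t) * c ^ 2 * k i - (∑ j, k j) / t * (x i - c) ^ 2
      ≤ (1 - t) * c ^ 2 * k i - k i / t * (x i - c) ^ 2 := by gcongr
    _ = k i * ((1 - t) * c ^ 2 - (x i - c) ^ 2 / t) := by ring
    _ ≤ k i * x i ^ 2 := mul_le_mul_of_nonneg_left hsq (hk i)

section SmulAddDiagonal

variable {ι : Type*} [Fintype ι] [DecidableEq ι] {L : Matrix ι ι ℝ} {k : ι → ℝ} {δ s : ℝ}

lemma dotProduct_smul_add_diagonal_mulVec (s : ℝ) (x : ι → ℝ) :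
    x ⬝ᵥ (s • L + diagonal k) *ᵥ x = s * (x ⬝ᵥ L *ᵥ x) + ∑ i, k i * x i ^ 2 := by
  rw [add_mulVec, dotProduct_add, smul_mulVec, dotProduct_smul, smul_eq_mul]
  congr 1
  simp only [dotProduct, mulVec_diagonal]
  exact Finset.sum_congr rfl fun i _ => by ring

lemma csInf_spectrum_smul_add_diagonal_le [Nonempty ι] (hL : L.IsHermitian)
    (hL1 : ∀ c : ℝ, L *ᵥ (fun _ => c) = 0) (s : ℝ) :
    sInf (spectrum ℝ (s • L + diagonal k)) ≤ (∑ i, k i) / Fintype.card ι := by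
  have h := (hL.smul_add_diagonal s k).mul_dotProduct_self_le
    (fun _ => csInf_spectrum_le) 1
  rw [dotProduct_smul_add_diagonal_mulVec, one_dotProduct_one, show L *ᵥ 1 = 0 from hL1 1] at h
  rw [le_div_iff₀ (by positivity)]
  simpa using h

lemma mul_dotProduct_self_le_of_sum_eq_zero (hk : ∀ i, 0 ≤ k i)
    (hgap : ∀ x : ι → ℝ, ∑ i, x i = 0 → δ * (x ⬝ᵥ x) ≤ x ⬝ᵥ L *ᵥ x) (hs : 0 ≤ s)
    {x : ι → ℝ} (hx : ∑ i, x i = 0) :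
    δ * s * (x ⬝ᵥ x) ≤ x ⬝ᵥ (s • L + diagonal k) *ᵥ x := by
  rw [dotProduct_smul_add_diagonal_mulVec]
  have hK : 0 ≤ ∑ i, k i * x i ^ 2 := Finset.sum_nonneg fun i _ => mul_nonneg (hk i) (sq_nonneg _)
  calc δ * s * (x ⬝ᵥ x) = s * (δ * (x ⬝ᵥ x)) := by ring
    _ ≤ s * (x ⬝ᵥ L *ᵥ x) := mul_le_mul_of_nonneg_left (hgap x hx) hs
    _ ≤ _ := le_add_of_nonneg_right hK

/-- Write `x = a • 1 + r` with `∑ r = 0` and `R = ‖r‖² = 1 - n a²`. The gap gives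
`s xᵀ L x ≥ δ s R` and `le_sum_mul_sq` gives `xᵀ (diagonal k) x ≥ (1 - t) (1 - R) T - (∑ k)/t · R`
with `T = (∑ k)/n`; the sum is `≥ (1 - t) T` as soon as `δ s ≥ (∑ k)/t + T`. -/
lemma mul_mean_le_dotProduct_mulVec [Nonempty ι] (hL : L.IsHermitian)
    (hL1 : ∀ c : ℝ, L *ᵥ (fun _ => c) = 0) (hk : ∀ i, 0 ≤ k i)
    (hgap : ∀ x : ι → ℝ, ∑ i, x i = 0 → δ * (x ⬝ᵥ x) ≤ x ⬝ᵥ L *ᵥ x) (hs : 0 ≤ s) {t : ℝ}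
    (ht : 0 < t) (hst : (∑ i, k i) / t + (∑ i, k i) / Fintype.card ι ≤ δ * s)
    {x : ι → ℝ} (hx : x ⬝ᵥ x = 1) :
    (1 - t) * ((∑ i, k i) / Fintype.card ι) ≤ x ⬝ᵥ (s • L + diagonal k) *ᵥ x := by
  set n := (Fintype.card ι : ℝ)
  set S := ∑ i, k i
  set a := (∑ i, x i) / n
  set R := ∑ i, (x i - a) ^ 2
  have hn : 0 < n := by positivity
  have hR : R = 1 - n * a ^ 2 := by rw [← hx]; exact sum_sub_mean_sq x
  have hR0 : 0 ≤ R := Finset.sum_nonneg fun i _ => sq_nonneg _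
  have hT : 0 ≤ S / n := div_nonneg (Finset.sum_nonneg fun i _ => hk i) hn.le
  have haS : a ^ 2 * S = (1 - R) * (S / n) := by rw [hR]; field_simp; ring
  have hLx : δ * R ≤ x ⬝ᵥ L *ᵥ x := by
    have hrr : (x - fun _ => a) ⬝ᵥ (x - fun _ => a) = R := by simp only [R, dotProduct, sq]; rfl
    rw [← hrr, ← dotProduct_mulVec_sub_const hL hL1 x a]
    exact hgap _ (sum_sub_mean_eq_zero x)
  have hKx := le_sum_mul_sq hk x a ht
  rw [dotProduct_smul_add_diagonal_mulVec]
  nlinarith [mul_le_mul_of_nonneg_left hLx hs, mul_nonneg hR0 (sub_nonneg.2 hst),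
    mul_nonneg hR0 (mul_nonneg ht.le hT)]

lemma mul_mean_le_csInf_spectrum [Nonempty ι] (hL : L.IsHermitian)
    (hL1 : ∀ c : ℝ, L *ᵥ (fun _ => c) = 0) (hk : ∀ i, 0 ≤ k i)
    (hgap : ∀ x : ι → ℝ, ∑ i, x i = 0 → δ * (x ⬝ᵥ x) ≤ x ⬝ᵥ L *ᵥ x) (hs : 0 ≤ s) {t : ℝ}
    (ht : 0 < t) (hst : (∑ i, k i) / t + (∑ i, k i) / Fintype.card ι ≤ δ * s) :
    (1 - t) * ((∑ i, k i) / Fintype.card ι) ≤ sInf (spectrum ℝ (s • L + diagonal k)) := by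
  have hA := hL.smul_add_diagonal s k
  refine le_csInf ⟨_, hA.eigenvalues_mem_spectrum_real (Classical.arbitrary ι)⟩ fun μ hμ => ?_
  obtain ⟨v, hv, rfl⟩ := hA.exists_dotProduct_mulVec_eq_of_mem_spectrum hμ
  exact mul_mean_le_dotProduct_mulVec hL hL1 hk hgap hs ht hst hv

lemma mul_le_of_mem_spectrum_of_ne_csInf [Nonempty ι] (hL : L.IsHermitian)
    (hk : ∀ i, 0 ≤ k i) (hgap : ∀ x : ι → ℝ, ∑ i, x i = 0 → δ * (x ⬝ᵥ x) ≤ x ⬝ᵥ L *ᵥ x)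
    (hs : 0 ≤ s) {μ : ℝ} (hμ : μ ∈ spectrum ℝ (s • L + diagonal k))
    (hne : μ ≠ sInf (spectrum ℝ (s • L + diagonal k))) : δ * s ≤ μ := by
  have hA := hL.smul_add_diagonal s k
  rw [hA.spectrum_real_eq_range_eigenvalues] at hμ hne
  obtain ⟨i, rfl⟩ := hμ
  obtain ⟨j, hj⟩ := hA.spectrum_real_eq_range_eigenvalues ▸ hA.csInf_spectrum_mem
  refine hA.le_eigenvalues_of_le_on_hyperplane 1 (i := i) (j := j) (fun x hx => ?_)
    (fun hij => hne ?_) ?_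
  · exact mul_dotProduct_self_le_of_sum_eq_zero hk hgap hs (by rwa [one_dotProduct] at hx)
  · rw [hij, hj]
  · rw [hj]
    exact csInf_le (Set.finite_range _).bddBelow ⟨i, rfl⟩

end SmulAddDiagonal

/-- For `A(γ) = (1/γ)L + K` with `L` symmetric PSD of rank `n-1` (kernel spanned by
`1ₙ`) and `K` positive definite diagonal, as `γ → 0⁺` the smallest eigenvalue of
`A(γ)` converges to `(∑ Kᵢ)/n` and all other eigenvalues diverge to `+∞`. -/
theorem stmt15 (n : ℕ) (hn : 0 < n) (L : Matrix (Fin n) (Fin n) ℝ)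
    (hLpsd : L.PosSemidef)
    (hker : ∀ v : Fin n → ℝ, L *ᵥ v = 0 ↔ ∃ c : ℝ, v = fun _ => c)
    (k : Fin n → ℝ) (hk : ∀ i, 0 < k i) :
    letI A : ℝ → Matrix (Fin n) (Fin n) ℝ := fun γ => (1 / γ) • L + Matrix.diagonal k
    Tendsto (fun γ => sInf (spectrum ℝ (A γ))) (nhdsWithin 0 (Set.Ioi 0))
        (nhds ((∑ i, k i) / (n : ℝ))) ∧
      ∀ M : ℝ, ∀ᶠ γ in nhdsWithin 0 (Set.Ioi 0),
        ∀ μ ∈ spectrum ℝ (A γ), μ ≠ sInf (spectrum ℝ (A γ)) → M < μ := by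
  beta_reduce
  have : Nonempty (Fin n) := ⟨⟨0, hn⟩⟩
  have hL1 : ∀ c : ℝ, L *ᵥ (fun _ => c) = 0 := fun c => (hker _).2 ⟨c, rfl⟩
  have hk0 : ∀ i, 0 ≤ k i := fun i => (hk i).le
  obtain ⟨δ, hδ, hgap⟩ := exists_pos_mul_le_of_sum_eq_zero hLpsd fun v => (hker v).1
  have hlarge : Tendsto (fun γ : ℝ => δ * (1 / γ)) (nhdsWithin 0 (Set.Ioi 0)) atTop := by
    simpa using tendsto_inv_nhdsGT_zero.const_mul_atTop hδ
  set T := (∑ i, k i) / (n : ℝ)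
  have hT : 0 < T := div_pos (Finset.sum_pos (fun i _ => hk i) Finset.univ_nonempty) (by positivity)
  refine ⟨tendsto_order.2 ⟨fun a ha => ?_, fun b hb => ?_⟩, fun M => ?_⟩
  · obtain ⟨t, ht, hat⟩ : ∃ t > 0, a < (1 - t) * T :=
      ⟨(T - a) / (2 * T), by positivity, by field_simp; linarith⟩
    filter_upwards [hlarge.eventually_ge_atTop ((∑ i, k i) / t + T), self_mem_nhdsWithin]
      with γ hγ hγ0
    refine hat.trans_le ?_
    simpa using mul_mean_le_csInf_spectrum (s := 1 / γ) hLpsd.isHermitian hL1 hk0 hgap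
      (one_div_pos.2 hγ0).le ht (by simpa using hγ)
  · refine Eventually.of_forall fun γ => lt_of_le_of_lt ?_ hb
    simpa using csInf_spectrum_smul_add_diagonal_le hLpsd.isHermitian hL1 (k := k) (1 / γ)
  · filter_upwards [hlarge.eventually_gt_atTop M, self_mem_nhdsWithin] with γ hM hγ μ hμ hne
    exact hM.trans_le (mul_le_of_mem_spectrum_of_ne_csInf hLpsd.isHermitian hk0 hgap
      (one_div_pos.2 hγ).le hμ hne)
end
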